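/- Let x be a sequence of length m with distinct elements, i ∈ {1,...,m-1} with x[i] < x[i+1], and y = τ(x,i). For each position j with i+1 < j ≤ m: if PD_x[j] = j - i then PD_y[j] = PD_x[j] - 1; if PD_x[j] = j - i - 1 and x[i] < x[j] < x[i+1], then PD_y[j] may differ from PD_x[j] by one; and if PD_x[j] ∉ {j-i, j-i-1} then PD_y[j] = PD_x[j]. In particular |PD_y[j] - PD_x[j]| ≤ 1 for all j > i+1. -/

import Mathlib

/-- Binary tree shapes (Cartesian trees are determined by their shape). -/
inductive BTree : Type
  | nil : BTree
  | node : BTree → BTree → BTree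
deriving DecidableEq

namespace BTree

/-- Number of nodes. -/
def size : BTree → ℕ
  | nil => 0
  | node l r => size l + size r + 1

/-- Length of the leftmost path. -/
def LMP : BTree → ℕ
  | nil => 0
  | node l _ => LMP l + 1

/-- Length of the rightmost path. -/
def RMP : BTree → ℕ
  | nil => 0
  | node _ r => RMP r + 1

end BTree

/-- Minimum value of a list (0 for the empty list). -/
def listMin : List ℤ → ℤ
  | [] => 0
  | a :: t => t.foldl min a

/-- Index (0-based) of the minimum of a list. -/
def minIdx (l : List ℤ) : ℕ := l.idxOf (listMin l)

/-- Cartesian tree of a list, with fuel for termination. -/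
def ctreeAux : ℕ → List ℤ → BTree
  | 0, _ => .nil
  | _ + 1, [] => .nil
  | n + 1, a :: t =>
      let g := minIdx (a :: t)
      .node (ctreeAux n ((a :: t).take g)) (ctreeAux n ((a :: t).drop (g + 1)))

/-- Cartesian tree of a list: the root is the position of the minimum,
its subtrees are the Cartesian trees of the prefix and suffix around it. -/
def ctreeL (l : List ℤ) : BTree := ctreeAux l.length l

/-- The factor x[a..b] (1-based positions) of a sequence, as a list. -/
def seqList (x : ℕ → ℤ) (a b : ℕ) : List ℤ :=
  (List.range (b + 1 - a)).map (fun k => x (a + k))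

/-- Cartesian tree of the sequence x[1..m]. -/
def ctreeOf (m : ℕ) (x : ℕ → ℤ) : BTree := ctreeL (seqList x 1 m)

/-- Positions j < h (1-based) with x[j] < x[h]. -/
def PDset (x : ℕ → ℤ) (h : ℕ) : Finset ℕ :=
  (Finset.Ico 1 h).filter (fun j => x j < x h)

/-- Parent-distance table: PD_x[h] = h - max{j < h : x[j] < x[h]}, 0 if no such j. -/
def PD (x : ℕ → ℤ) (h : ℕ) : ℕ :=
  if hs : (PDset x h).Nonempty then h - (PDset x h).max' hs else 0

/-- Positions h < j ≤ m with x[j] < x[h]. -/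
def RPDset (m : ℕ) (x : ℕ → ℤ) (h : ℕ) : Finset ℕ :=
  (Finset.Ioc h m).filter (fun j => x j < x h)

/-- Reverse parent-distance table: RPD_x[h] = min{j > h : x[j] < x[h]} - h, 0 if no such j. -/
def RPD (m : ℕ) (x : ℕ → ℤ) (h : ℕ) : ℕ :=
  if hs : (RPDset m x h).Nonempty then (RPDset m x h).min' hs - h else 0

/-- Referent of h: the smallest position j > h with x[j] < x[h], or -1 if none. -/
def refD (m : ℕ) (x : ℕ → ℤ) (h : ℕ) : ℤ :=
  if hs : (RPDset m x h).Nonempty then ((RPDset m x h).min' hs : ℤ) else -1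

/-- Skipped-number table: SN_x[h] is the number of nodes on the rightmost path of the
left subtree of node h in C(x), i.e. the number of positions whose referent is h. -/
def SN (m : ℕ) (x : ℕ → ℤ) (h : ℕ) : ℕ :=
  ((Finset.Ico 1 h).filter (fun j => refD m x j = (h : ℤ))).card

/-- The swap τ(x,i): exchange the entries at positions i and i+1. -/
def swapAt (x : ℕ → ℤ) (i : ℕ) : ℕ → ℤ :=
  fun j => if j = i then x (i + 1) else if j = i + 1 then x i else x j

/-- ng(T,i): the Cartesian trees obtained from a sequence realizing T by one swap
at position i (valid positions are 1 ≤ i ≤ m-1). -/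
def ngi (m : ℕ) (T : BTree) (i : ℕ) : Set BTree :=
  { S | 1 ≤ i ∧ i + 1 ≤ m ∧ ∃ x : ℕ → ℤ, Set.InjOn x (Set.Icc 1 m) ∧
        ctreeOf m x = T ∧ S = ctreeOf m (swapAt x i) }

/-- ng(T): the swap neighbourhood of T. -/
def ng (m : ℕ) (T : BTree) : Set BTree := ⋃ i, ngi m T i

/-- Number of permutations of {1,...,n} whose Cartesian tree is A. -/
noncomputable def permCount (n : ℕ) (A : BTree) : ℕ :=
  Set.ncard { σ : Equiv.Perm (Fin n) |
    ctreeL (List.ofFn (fun k : Fin n => ((σ k : ℕ) : ℤ) + 1)) = A }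

/-- Product over all nodes t of A of the size of the subtree rooted at t. -/
def hookProd : BTree → ℕ
  | .nil => 1
  | .node l r => (BTree.node l r).size * hookProd l * hookProd r


lemma mem_PDset' {x : ℕ → ℤ} {j k : ℕ} :
    k ∈ PDset x j ↔ (1 ≤ k ∧ k < j) ∧ x k < x j := by
  simp [PDset, Finset.mem_filter, Finset.mem_Ico]

lemma PD_eq_of_max' (x : ℕ → ℤ) (j a : ℕ) (ha : a ∈ PDset x j)
    (hmax : ∀ k ∈ PDset x j, k ≤ a) : PD x j = j - a := by
  have hne : (PDset x j).Nonempty := ⟨a, ha⟩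
  have h : (PDset x j).max' hne = a :=
    le_antisymm (Finset.max'_le _ _ _ hmax) (Finset.le_max' _ _ ha)
  simp [PD, hne, h]

theorem stmt7 (m i : ℕ) (x : ℕ → ℤ) (hx : Set.InjOn x (Set.Icc 1 m))
    (hi1 : 1 ≤ i) (him : i + 1 ≤ m) (hlt : x i < x (i + 1)) :
    ∀ j, i + 1 < j → j ≤ m →
      (((PD x j : ℤ) = (j : ℤ) - i →
          (PD (swapAt x i) j : ℤ) = (PD x j : ℤ) - 1) ∧
       ((PD x j : ℤ) = (j : ℤ) - i - 1 → x i < x j → x j < x (i + 1) →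
          ((PD (swapAt x i) j : ℤ) - (PD x j : ℤ)).natAbs ≤ 1) ∧
       ((PD x j : ℤ) ≠ (j : ℤ) - i → (PD x j : ℤ) ≠ (j : ℤ) - i - 1 →
          PD (swapAt x i) j = PD x j) ∧
       ((PD (swapAt x i) j : ℤ) - (PD x j : ℤ)).natAbs ≤ 1) := by
  intro j hj1 hj2
  set y := swapAt x i with hy
  have hij : i < j := lt_trans (Nat.lt_succ_self i) hj1
  have hji : j ≠ i := Nat.ne_of_gt hij
  have hji1 : j ≠ i + 1 := Nat.ne_of_gt hj1
  have hyj : y j = x j := by simp [hy, swapAt, hji, hji1]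
  have hyi : y i = x (i + 1) := by simp [hy, swapAt]
  have hyi1 : y (i + 1) = x i := by simp [hy, swapAt]
  have hyk : ∀ k, k ≠ i → k ≠ i + 1 → y k = x k := by
    intro k h1 h2; simp [hy, swapAt, h1, h2]
  have hiI : i ∈ Set.Icc 1 m := ⟨hi1, le_trans (Nat.le_succ i) him⟩
  have hi1I : (i + 1) ∈ Set.Icc 1 m := ⟨le_trans hi1 (Nat.le_succ i), him⟩
  have hjI : j ∈ Set.Icc 1 m := ⟨le_trans hi1 (le_of_lt hij), hj2⟩
  have hxij : x i ≠ x j := fun h => Nat.ne_of_lt hij (hx hiI hjI h)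
  have hxi1j : x (i + 1) ≠ x j := fun h => Nat.ne_of_lt hj1 (hx hi1I hjI h)
  have memY : ∀ k, k ∈ PDset y j ↔ (1 ≤ k ∧ k < j) ∧ y k < x j := by
    intro k; rw [mem_PDset', hyj]
  by_cases hne : (PDset x j).Nonempty
  · set M := (PDset x j).max' hne with hM
    have hMmem : M ∈ PDset x j := (PDset x j).max'_mem hne
    have hMub : ∀ k ∈ PDset x j, k ≤ M := fun k hk => Finset.le_max' _ k hk
    obtain ⟨⟨hM1, hMj⟩, hMx⟩ := mem_PDset'.mp hMmem
    have hPDx : PD x j = j - M := PD_eq_of_max' x j M hMmem hMub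
    have hPDxZ : (PD x j : ℤ) = (j : ℤ) - M := by
      rw [hPDx]; exact_mod_cast Nat.cast_sub (le_of_lt hMj)
    rcases lt_trichotomy M i with hMi | hMi | hMi
    · -- M < i : nothing in {i, i+1} is in the set; PD unchanged
      have hnxi : ¬ x i < x j := fun h =>
        absurd (hMub i (mem_PDset'.mpr ⟨⟨hi1, hij⟩, h⟩)) (not_le.mpr hMi)
      have hnxi1 : ¬ x (i + 1) < x j := fun h =>
        absurd (hMub (i + 1) (mem_PDset'.mpr ⟨⟨le_trans hi1 (Nat.le_succ i), hj1⟩, h⟩))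
          (by omega)
      have hPDy : PD y j = j - M := by
        apply PD_eq_of_max' y j M
        · exact (memY M).mpr ⟨⟨hM1, hMj⟩, by
            rw [hyk M (by omega) (by omega)]; exact hMx⟩
        · intro k hk
          obtain ⟨⟨hk1, hkj⟩, hkx⟩ := (memY k).mp hk
          by_cases h1 : k = i
          · subst h1; rw [hyi] at hkx; exact absurd hkx hnxi1
          by_cases h2 : k = i + 1
          · subst h2; rw [hyi1] at hkx; exact absurd hkx hnxi
          · exact hMub k (mem_PDset'.mpr ⟨⟨hk1, hkj⟩, by rwa [hyk k h1 h2] at hkx⟩)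
      have heq : PD y j = PD x j := by rw [hPDy, hPDx]
      refine ⟨?_, ?_, fun _ _ => heq, by simp [heq]⟩
      · intro h; exfalso; omega
      · intro h _ _; exfalso; omega
    · -- M = i : PD x j = j - i, PD y j = j - (i+1)
      subst hMi
      have hnxi1 : ¬ x (M + 1) < x j := fun h =>
        absurd (hMub (M + 1) (mem_PDset'.mpr ⟨⟨le_trans hM1 (Nat.le_succ M), hj1⟩, h⟩))
          (by omega)
      have hPDy : PD y j = j - (M + 1) := by
        apply PD_eq_of_max' y j (M + 1)
        · exact (memY (M + 1)).mpr ⟨⟨le_trans hM1 (Nat.le_succ M), hj1⟩, by rw [hyi1]; exact hMx⟩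
        · intro k hk
          obtain ⟨⟨hk1, hkj⟩, hkx⟩ := (memY k).mp hk
          by_cases h1 : k = M
          · omega
          by_cases h2 : k = M + 1
          · omega
          · have := hMub k (mem_PDset'.mpr ⟨⟨hk1, hkj⟩, by rwa [hyk k h1 h2] at hkx⟩)
            omega
      have hPDyZ : (PD y j : ℤ) = (j : ℤ) - (M + 1) := by
        rw [hPDy]; push_cast [Nat.cast_sub (by omega : M + 1 ≤ j)]; ring
      refine ⟨fun _ => by omega, fun h _ _ => by omega, fun h1 h2 => ?_, by omega⟩
      exfalso; omega
    · -- M > i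
      rcases eq_or_lt_of_le (Nat.succ_le_of_lt hMi) with hMi1 | hMi1
      · -- M = i + 1
        have hMeq : M = i + 1 := hMi1.symm
        rw [hMeq] at hMx hMub hPDx hPDxZ
        rcases lt_or_gt_of_ne hxij with hxi | hxi
        · -- x i < x j : PD unchanged (max stays i+1)
          have hPDy : PD y j = j - (i + 1) := by
            apply PD_eq_of_max' y j (i + 1)
            · exact (memY (i + 1)).mpr ⟨⟨by omega, hj1⟩, by rw [hyi1]; exact hxi⟩
            · intro k hk
              obtain ⟨⟨hk1, hkj⟩, hkx⟩ := (memY k).mp hk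
              by_cases h1 : k = i
              · omega
              by_cases h2 : k = i + 1
              · omega
              · exact hMub k (mem_PDset'.mpr ⟨⟨hk1, hkj⟩, by rwa [hyk k h1 h2] at hkx⟩)
          have heq : PD y j = PD x j := by rw [hPDy, hPDx]
          refine ⟨fun h => by omega, fun _ _ _ => by simp [heq], fun _ _ => heq, by simp [heq]⟩
        · -- x i > x j : new max is i, PD y j = j - i = PD x j + 1
          have hPDy : PD y j = j - i := by
            apply PD_eq_of_max' y j i
            · exact (memY i).mpr ⟨⟨hi1, hij⟩, by rw [hyi]; exact hMx⟩
            · intro k hk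
              obtain ⟨⟨hk1, hkj⟩, hkx⟩ := (memY k).mp hk
              by_cases h1 : k = i
              · omega
              by_cases h2 : k = i + 1
              · subst h2; rw [hyi1] at hkx; exact absurd hkx (not_lt.mpr (le_of_lt hxi))
              · have := hMub k (mem_PDset'.mpr ⟨⟨hk1, hkj⟩, by rwa [hyk k h1 h2] at hkx⟩)
                omega
          have hPDyZ : (PD y j : ℤ) = (j : ℤ) - i := by
            rw [hPDy]; exact_mod_cast Nat.cast_sub (by omega : i ≤ j)
          refine ⟨fun h => by omega, fun _ _ _ => by omega, fun h1 h2 => ?_, by omega⟩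
          exfalso; omega
      · -- M > i + 1 : PD unchanged
        have hPDy : PD y j = j - M := by
          apply PD_eq_of_max' y j M
          · exact (memY M).mpr ⟨⟨hM1, hMj⟩, by
              rw [hyk M (by omega) (by omega)]; exact hMx⟩
          · intro k hk
            obtain ⟨⟨hk1, hkj⟩, hkx⟩ := (memY k).mp hk
            by_cases h1 : k = i
            · omega
            by_cases h2 : k = i + 1
            · omega
            · exact hMub k (mem_PDset'.mpr ⟨⟨hk1, hkj⟩, by rwa [hyk k h1 h2] at hkx⟩)
        have heq : PD y j = PD x j := by rw [hPDy, hPDx]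
        refine ⟨fun h => ?_, fun _ _ _ => by simp [heq], fun _ _ => heq, by simp [heq]⟩
        exfalso; omega
  · -- PDset x j empty : PD x j = 0 and PDset y j empty too
    have hnxi : ¬ x i < x j := fun h =>
      hne ⟨i, mem_PDset'.mpr ⟨⟨hi1, hij⟩, h⟩⟩
    have hnxi1 : ¬ x (i + 1) < x j := fun h =>
      hne ⟨i + 1, mem_PDset'.mpr ⟨⟨le_trans hi1 (Nat.le_succ i), hj1⟩, h⟩⟩
    have hPDx : PD x j = 0 := by simp [PD, hne]
    have hney : ¬ (PDset y j).Nonempty := by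
      rintro ⟨k, hk⟩
      obtain ⟨⟨hk1, hkj⟩, hkx⟩ := (memY k).mp hk
      by_cases h1 : k = i
      · subst h1; rw [hyi] at hkx; exact hnxi1 hkx
      by_cases h2 : k = i + 1
      · subst h2; rw [hyi1] at hkx; exact hnxi hkx
      · exact hne ⟨k, mem_PDset'.mpr ⟨⟨hk1, hkj⟩, by rwa [hyk k h1 h2] at hkx⟩⟩
    have hPDy : PD y j = 0 := by simp [PD, hney]
    refine ⟨fun h => ?_, fun h _ _ => by omega, fun _ _ => by rw [hPDy, hPDx], by omega⟩
    exfalso; rw [hPDx] at h; push_cast at h; omega
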